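/- (Limit used in the proof of Lemma 6.2, unbounded case.) Assume f is continuous and strictly positive on (0,∞), so that x ↦ ρ_{≤x} is a continuous strictly increasing bijection from [0,∞) onto [0,ρ); for each λ ∈ (0,1/m) let x_λ > 0 be the unique solution of ρ_{≤x_λ} = ρ² (i.e. x_λ = G^{−1}(ρ) where G(x) = ρ_{≤x}/ρ). If the tail of S has upper Matuszewska index less than −2, expressed via the equivalent Potter-type bound — there exist constants C > 0, ε > 0 and x₀ > 0 such that F̄(γx) ≤ C·γ^{−(2+ε)}·F̄(x) for all x ≥ x₀ and all γ ≥ 1 — then lim_{λ → (1/m)⁻} ln(1/(1−ρ))·(1−ρ)·x_λ = 0, where ρ = λm. -/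

import Mathlib

open MeasureTheory Filter
open Topology

/-- Relevant load `ρ_{≤x} = λ ∫₀^x t f(t) dt`. -/
noncomputable def rhoLe (f : ℝ → ℝ) (lam x : ℝ) : ℝ :=
  lam * ∫ t in (0:ℝ)..x, t * f t

/-- Tail of the service requirement distribution, `F̄(x) = ∫_x^∞ f(t) dt`. -/
noncomputable def tailS (f : ℝ → ℝ) (x : ℝ) : ℝ :=
  ∫ t in Set.Ioi x, f t

/-!
Writing `u = 1 - ρ`, the defining equation `ρ_{≤x_λ} = ρ²` says that the first-moment tail
`∫_{x_λ}^∞ t f(t) dt` equals `m u`. Integrating by parts, this tail is `x F̄(x) + ∫_x^∞ F̄`,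
which by the Potter bound is `O(x^{-(1+ε)})`. Hence `x_λ = O(u^{-1/(1+ε)})`, so
`ln(1/u) u x_λ = O(ln(1/u) u^{ε/(1+ε)}) → 0`.
-/

open Set Real

theorem le_const_mul_rpow_neg_of_scaling_le {T : ℝ → ℝ} {C α x₀ : ℝ} (hx₀ : 0 < x₀)
    (hT : ∀ x ≥ x₀, ∀ γ ≥ (1:ℝ), T (γ * x) ≤ C * γ ^ (-α) * T x) :
    ∀ x ≥ x₀, T x ≤ C * x₀ ^ α * T x₀ * x ^ (-α) := by
  intro x hx
  have h := hT x₀ le_rfl (x / x₀) ((one_le_div hx₀).2 hx)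
  rwa [div_mul_cancel₀ _ hx₀.ne', div_rpow (hx₀.trans_le hx).le hx₀.le, rpow_neg hx₀.le,
    div_inv_eq_mul, mul_comm (x ^ (-α)), ← mul_assoc, mul_right_comm _ _ (T x₀)] at h

theorem tailS_nonneg {f : ℝ → ℝ} (hf : ∀ t, 0 ≤ f t) (x : ℝ) : 0 ≤ tailS f x :=
  setIntegral_nonneg measurableSet_Ioi fun t _ => hf t

theorem hasDerivAt_tailS {f : ℝ → ℝ} {a x : ℝ} (hf : IntegrableOn f (Ioi a))
    (hcont : ContinuousOn f (Ioi a)) (hx : a < x) : HasDerivAt (tailS f) (-f x) x := by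
  have hprim : HasDerivAt (fun z => ∫ t in a..z, f t) (f x) x :=
    intervalIntegral.integral_hasDerivAt_right
      ((intervalIntegrable_iff_integrableOn_Ioc_of_le hx.le).2 (hf.mono_set Ioc_subset_Ioi_self))
      (hcont.stronglyMeasurableAtFilter isOpen_Ioi x hx) (hcont.continuousAt (Ioi_mem_nhds hx))
  refine (hprim.const_sub (∫ t in Ioi a, f t)).congr_of_eventuallyEq ?_
  filter_upwards [Ioi_mem_nhds hx] with z hz
  rw [← intervalIntegral.integral_Ioi_sub_Ioi hf hz.le, sub_sub_cancel, tailS]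

theorem integral_Ioi_mul_self_eq_add_integral_tailS {f : ℝ → ℝ} {a y : ℝ}
    (hf : IntegrableOn f (Ioi a)) (hcont : ContinuousOn f (Ioi a)) (hy : a < y)
    (htf : IntegrableOn (fun t => t * f t) (Ioi y)) (hT : IntegrableOn (tailS f) (Ioi y))
    (hlim : Tendsto (fun t => t * tailS f t) atTop (𝓝 0)) :
    ∫ t in Ioi y, t * f t = y * tailS f y + ∫ t in Ioi y, tailS f t := by
  have hderiv : ∀ t, a < t →
      HasDerivAt (fun t => t * tailS f t) (tailS f t - t * f t) t := fun t ht => by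
    have h : HasDerivAt (fun t => t * tailS f t) (1 * tailS f t + t * -f t) t :=
      (hasDerivAt_id' t).mul (hasDerivAt_tailS hf hcont ht)
    rwa [one_mul, mul_neg, ← sub_eq_add_neg] at h
  have h := integral_Ioi_of_hasDerivAt_of_tendsto
    (hderiv y hy).continuousAt.continuousWithinAt (fun t ht => hderiv t (hy.trans ht))
    (hT.sub htf) hlim
  rw [integral_sub hT htf] at h
  linarith

theorem integral_Ioi_mul_self_le_of_tailS_le {f : ℝ → ℝ} {a y D α : ℝ}
    (hf_nonneg : ∀ t, 0 ≤ f t) (hf : IntegrableOn f (Ioi a)) (hcont : ContinuousOn f (Ioi a))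
    (hay : a < y) (hy : 0 < y) (hα : 1 < α) (htf : IntegrableOn (fun t => t * f t) (Ioi y))
    (hbound : ∀ t ≥ y, tailS f t ≤ D * t ^ (-α)) :
    ∫ t in Ioi y, t * f t ≤ α / (α - 1) * D * y ^ (1 - α) := by
  have hmul_rpow : ∀ t > 0, t * (D * t ^ (-α)) = D * t ^ (1 - α) := fun t ht => by
    rw [← neg_add_eq_sub, rpow_add_one ht.ne']
    ring
  have hpow_int : IntegrableOn (fun t => D * t ^ (-α)) (Ioi y) :=
    (integrableOn_Ioi_rpow_of_lt (by linarith) hy).const_mul D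
  have hT_int : IntegrableOn (tailS f) (Ioi y) := by
    refine hpow_int.mono' (ContinuousOn.aestronglyMeasurable (fun t ht => ?_) measurableSet_Ioi) ?_
    · exact (hasDerivAt_tailS hf hcont (hay.trans ht)).continuousAt.continuousWithinAt
    · filter_upwards [ae_restrict_mem measurableSet_Ioi] with t ht
      rw [norm_of_nonneg (tailS_nonneg hf_nonneg t)]
      exact hbound t (le_of_lt ht)
  have hlim : Tendsto (fun t => t * tailS f t) atTop (𝓝 0) := by
    have hpow : Tendsto (fun t : ℝ => D * t ^ (1 - α)) atTop (𝓝 0) := by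
      simpa using (tendsto_rpow_neg_atTop (y := α - 1) (by linarith)).const_mul D
    refine squeeze_zero' ?_ ?_ hpow
    · filter_upwards [eventually_gt_atTop 0] with t ht
      exact mul_nonneg ht.le (tailS_nonneg hf_nonneg t)
    · filter_upwards [eventually_ge_atTop y] with t ht
      rw [← hmul_rpow t (hy.trans_le ht)]
      exact mul_le_mul_of_nonneg_left (hbound t ht) (hy.trans_le ht).le
  have hboundary : y * tailS f y ≤ D * y ^ (1 - α) := by
    rw [← hmul_rpow y hy]
    exact mul_le_mul_of_nonneg_left (hbound y le_rfl) hy.le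
  have htail : ∫ t in Ioi y, tailS f t ≤ D * y ^ (1 - α) / (α - 1) := by
    calc ∫ t in Ioi y, tailS f t ≤ ∫ t in Ioi y, D * t ^ (-α) :=
          setIntegral_mono_on hT_int hpow_int measurableSet_Ioi fun t ht => hbound t (le_of_lt ht)
      _ = D * y ^ (1 - α) / (α - 1) := by
          rw [integral_const_mul, integral_Ioi_rpow_of_lt (by linarith) hy, neg_add_eq_sub,
            neg_div, ← div_neg, neg_sub, mul_div_assoc]
  rw [integral_Ioi_mul_self_eq_add_integral_tailS hf hcont hay htf hT_int hlim]
  calc y * tailS f y + ∫ t in Ioi y, tailS f t ≤ D * y ^ (1 - α) + D * y ^ (1 - α) / (α - 1) :=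
        add_le_add hboundary htail
    _ = α / (α - 1) * D * y ^ (1 - α) := by
        field_simp [(sub_pos.2 hα).ne']
        ring

theorem integral_Ioi_mul_self_eq_of_rhoLe_eq {f : ℝ → ℝ} {m lam x : ℝ}
    (hm_int : IntegrableOn (fun t => t * f t) (Ioi 0)) (hm_def : m = ∫ t in Ioi (0:ℝ), t * f t)
    (hlam : 0 < lam) (hx : 0 < x) (hrho : rhoLe f lam x = (lam * m) ^ 2) :
    ∫ t in Ioi x, t * f t = m * (1 - lam * m) := by
  have hhead : ∫ t in (0:ℝ)..x, t * f t = lam * m ^ 2 :=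
    mul_left_cancel₀ hlam.ne' (by rw [← rhoLe, hrho]; ring)
  rw [← intervalIntegral.integral_Ioi_sub_Ioi hm_int hx.le, ← hm_def] at hhead
  linarith

theorem le_mul_rpow_neg_inv_of_mul_le_mul_rpow_neg {y u c K s x₀ : ℝ} (hy : 0 < y) (hu0 : 0 < u)
    (hu1 : u ≤ 1) (hc : 0 < c) (hK : 0 ≤ K) (hs : 0 < s) (hx₀ : 0 ≤ x₀)
    (h : x₀ < y → c * u ≤ K * y ^ (-s)) : y ≤ (x₀ + (K / c) ^ s⁻¹) * u ^ (-s⁻¹) := by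
  have hone : 1 ≤ u ^ (-s⁻¹) :=
    one_le_rpow_of_pos_of_le_one_of_nonpos hu0 hu1 (neg_nonpos.2 (inv_nonneg.2 hs.le))
  rw [add_mul]
  rcases le_or_gt y x₀ with hyx | hyx
  · have : 0 ≤ (K / c) ^ s⁻¹ * u ^ (-s⁻¹) := by positivity
    nlinarith
  · have hys : y ^ s ≤ K / (c * u) := by
      have := h hyx
      rw [rpow_neg hy.le, ← div_eq_mul_inv] at this
      rw [le_div_iff₀ (by positivity)]
      rwa [le_div_iff₀ (by positivity), mul_comm] at this
    have hy' : y ≤ (K / c) ^ s⁻¹ * u ^ (-s⁻¹) := by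
      rw [rpow_neg hu0.le, ← inv_rpow hu0.le, ← mul_rpow (by positivity) (by positivity),
        ← div_eq_mul_inv, div_div]
      exact (le_rpow_inv_iff_of_pos hy.le (by positivity) hs).2 hys
    nlinarith

theorem tendsto_one_sub_mul_nhdsLT_one_div {m : ℝ} (hm : 0 < m) :
    Tendsto (fun lam => 1 - lam * m) (𝓝[<] (1 / m)) (𝓝[>] 0) := by
  refine tendsto_nhdsWithin_of_tendsto_nhds_of_eventually_within _ ?_ ?_
  · have hcont : Continuous fun lam => 1 - lam * m := by fun_prop
    simpa [hm.ne'] using (hcont.tendsto (1 / m)).mono_left nhdsWithin_le_nhds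
  · filter_upwards [self_mem_nhdsWithin] with lam hlam
    exact sub_pos.2 ((lt_div_iff₀ hm).1 hlam)

theorem tendsto_log_one_div_mul_mul_of_le_mul_rpow_neg {ι : Type*} {l : Filter ι} {u x : ι → ℝ}
    {B β : ℝ} (hβ : β < 1) (hu : Tendsto u l (𝓝[>] 0))
    (hx : ∀ᶠ i in l, 0 ≤ x i ∧ x i ≤ B * u i ^ (-β)) :
    Tendsto (fun i => log (1 / u i) * u i * x i) l (𝓝 0) := by
  have hlim : Tendsto (fun i => -B * (log (u i) * u i ^ (1 - β))) l (𝓝 0) := by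
    simpa using ((tendsto_log_mul_rpow_nhdsGT_zero (sub_pos.2 hβ)).comp hu).const_mul (-B)
  have hu01 : ∀ᶠ i in l, 0 < u i ∧ 0 ≤ log (1 / u i) := by
    filter_upwards [hu (Ioo_mem_nhdsGT one_pos)] with i ⟨h0, h1⟩
    exact ⟨h0, log_nonneg (one_le_one_div h0 h1.le)⟩
  refine squeeze_zero' ?_ ?_ hlim
  · filter_upwards [hu01, hx] with i ⟨h0, hlog⟩ ⟨hx0, _⟩
    positivity
  · filter_upwards [hu01, hx] with i ⟨h0, hlog⟩ ⟨_, hxB⟩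
    calc log (1 / u i) * u i * x i ≤ log (1 / u i) * u i * (B * u i ^ (-β)) := by gcongr
      _ = -B * (log (u i) * u i ^ (1 - β)) := by
        rw [one_div, log_inv, ← neg_add_eq_sub, rpow_add_one h0.ne']
        ring

theorem log_one_sub_rho_inverse_tendsto_zero_general
    (f : ℝ → ℝ) (m : ℝ)
    (hf_nonneg : ∀ x, 0 ≤ f x)
    (hf_cont : ContinuousOn f (Set.Ioi 0))
    (hf_prob : ∫ t in Set.Ioi (0:ℝ), f t = 1)
    (hm_int : Integrable (fun t => t * f t) (volume.restrict (Set.Ioi 0)))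
    (hm_def : m = ∫ t in Set.Ioi (0:ℝ), t * f t)
    (hm_pos : 0 < m)
    (xfun : ℝ → ℝ)
    (hxfun : ∀ lam ∈ Set.Ioo 0 (1/m),
      0 < xfun lam ∧ rhoLe f lam (xfun lam) = (lam * m) ^ 2)
    (hmatuszewska : ∃ C > (0:ℝ), ∃ ε > (0:ℝ), ∃ x₀ > (0:ℝ),
      ∀ x ≥ x₀, ∀ γ ≥ (1:ℝ), tailS f (γ * x) ≤ C * γ ^ (-(2 + ε)) * tailS f x) :
    Tendsto (fun lam => Real.log (1 / (1 - lam * m)) * (1 - lam * m) * xfun lam)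
      (nhdsWithin (1/m) (Set.Iio (1/m))) (nhds 0) := by
  obtain ⟨C, hC, ε, hε, x₀, hx₀, hpotter⟩ := hmatuszewska
  have hf_int : IntegrableOn f (Ioi 0) := .of_integral_ne_zero (by rw [hf_prob]; exact one_ne_zero)
  have htail := le_const_mul_rpow_neg_of_scaling_le hx₀ hpotter
  set D := C * x₀ ^ (2 + ε) * tailS f x₀
  set K := (2 + ε) / (2 + ε - 1) * D
  have hK : 0 ≤ K :=
    mul_nonneg (div_nonneg (by linarith) (by linarith)) (by positivity [tailS_nonneg hf_nonneg x₀])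
  have hmoment : ∀ y > x₀, ∫ t in Ioi y, t * f t ≤ K * y ^ (-(2 + ε - 1)) :=
    fun y hy => neg_sub (2 + ε) 1 ▸ integral_Ioi_mul_self_le_of_tailS_le hf_nonneg hf_int hf_cont
      (hx₀.trans hy) (hx₀.trans hy) (by linarith)
      (IntegrableOn.mono_set hm_int (Ioi_subset_Ioi (hx₀.trans hy).le))
      fun t ht => htail t (hy.le.trans ht)
  have hx_bound : ∀ lam ∈ Ioo 0 (1 / m), 0 ≤ xfun lam ∧
      xfun lam ≤ (x₀ + (K / m) ^ (2 + ε - 1)⁻¹) * (1 - lam * m) ^ (-(2 + ε - 1)⁻¹) := by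
    intro lam hlam
    obtain ⟨hx, hrho⟩ := hxfun lam hlam
    have hlm : lam * m < 1 := (lt_div_iff₀ hm_pos).1 (one_div m ▸ hlam.2)
    refine ⟨hx.le, le_mul_rpow_neg_inv_of_mul_le_mul_rpow_neg hx (by linarith)
      (by nlinarith [hlam.1]) hm_pos hK (by linarith) hx₀.le fun hxx => ?_⟩
    rw [← integral_Ioi_mul_self_eq_of_rhoLe_eq hm_int hm_def hlam.1 hx hrho]
    exact hmoment _ hxx
  exact tendsto_log_one_div_mul_mul_of_le_mul_rpow_neg (inv_lt_one_of_one_lt₀ (by linarith))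
    (tendsto_one_sub_mul_nhdsLT_one_div hm_pos)
    (eventually_of_mem (Ioo_mem_nhdsLT (one_div_pos.2 hm_pos)) hx_bound)

/-- **Limit used in the proof of Lemma 6.2, unbounded case.**
For `x_λ = G⁻¹(ρ)`, i.e. the unique `x_λ > 0` with `ρ_{≤x_λ} = ρ²`, if the
tail of `S` has upper Matuszewska index less than `−2` (Potter-type bound),
then `lim_{λ → (1/m)⁻} ln(1/(1−ρ)) (1−ρ) x_λ = 0`, where `ρ = λm`. -/
theorem log_one_sub_rho_inverse_tendsto_zero
    (f : ℝ → ℝ) (m : ℝ)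
    (hf_meas : Measurable f)
    (hf_nonneg : ∀ x, 0 ≤ f x)
    (hf_zero : ∀ x ≤ 0, f x = 0)
    (hf_cont : ContinuousOn f (Set.Ioi 0))
    (hf_pos : ∀ x > (0:ℝ), 0 < f x)
    (hf_prob : ∫ t in Set.Ioi (0:ℝ), f t = 1)
    (hm_int : Integrable (fun t => t * f t) (volume.restrict (Set.Ioi 0)))
    (hm_def : m = ∫ t in Set.Ioi (0:ℝ), t * f t)
    (hm_pos : 0 < m)
    (hunbounded : ∀ x > (0:ℝ), 0 < tailS f x)
    (xfun : ℝ → ℝ)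
    (hxfun : ∀ lam ∈ Set.Ioo 0 (1/m),
      0 < xfun lam ∧ rhoLe f lam (xfun lam) = (lam * m) ^ 2)
    (hmatuszewska : ∃ C > (0:ℝ), ∃ ε > (0:ℝ), ∃ x₀ > (0:ℝ),
      ∀ x ≥ x₀, ∀ γ ≥ (1:ℝ), tailS f (γ * x) ≤ C * γ ^ (-(2 + ε)) * tailS f x) :
    Tendsto (fun lam => Real.log (1 / (1 - lam * m)) * (1 - lam * m) * xfun lam)
      (nhdsWithin (1/m) (Set.Iio (1/m))) (nhds 0) :=
  log_one_sub_rho_inverse_tendsto_zero_general f m hf_nonneg hf_cont hf_prob hm_int hm_def hm_pos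
    xfun hxfun hmatuszewska
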